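/- Let N_d ≥ 2 be an integer, let N_p = N_d − 1, and let i be a real number with cos i < −N_p/N_d. Then the relative trajectory p in a retrograde rotating frame is injective on [0,1); i.e., the relative trajectory is non-self-intersecting. -/
import Mathlib


open Real

/-- The relative trajectory in a retrograde rotating frame: ascending node longitude
`Θ = 2π N_d τ`, argument of latitude `u = 2π N_p τ`, inclination `i`, unit radius. -/
noncomputable def retrogradeTrajectory (Nd Np : ℕ) (i : ℝ) (τ : ℝ) : ℝ × ℝ × ℝ :=
  let Θ : ℝ := 2 * π * Nd * τ
  let u : ℝ := 2 * π * Np * τ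
  (Real.cos Θ * Real.cos u - Real.sin Θ * Real.sin u * Real.cos i,
   Real.sin Θ * Real.cos u + Real.cos Θ * Real.sin u * Real.cos i,
   Real.sin u * Real.sin i)


lemma abs_sin_nat_mul_le' (n : ℕ) (x : ℝ) : |Real.sin ((n : ℝ) * x)| ≤ n * |Real.sin x| := by
  induction n with
  | zero => simp
  | succ n ih =>
    push_cast
    rw [add_mul, one_mul, Real.sin_add]
    calc |Real.sin ((n:ℝ)*x) * Real.cos x + Real.cos ((n:ℝ)*x) * Real.sin x|
        ≤ |Real.sin ((n:ℝ)*x) * Real.cos x| + |Real.cos ((n:ℝ)*x) * Real.sin x| := abs_add_le _ _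
      _ ≤ |Real.sin ((n:ℝ)*x)| * 1 + 1 * |Real.sin x| := by
          rw [abs_mul, abs_mul]
          gcongr
          · exact Real.abs_cos_le_one x
          · exact Real.abs_cos_le_one _
      _ ≤ (n:ℝ) * |Real.sin x| + 1 * |Real.sin x| := by simpa using ih
      _ = ((n:ℝ)+1) * |Real.sin x| := by ring

lemma sq_dist_eq' (a b : ℝ) :
    (Real.cos a - Real.cos b)^2 + (Real.sin a - Real.sin b)^2 = (2 * Real.sin ((a-b)/2))^2 := by
  have hs : Real.sin ((a-b)/2) ^ 2 = 1/2 - Real.cos (2*((a-b)/2))/2 := Real.sin_sq_eq_half_sub _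
  rw [show 2*((a-b)/2) = a - b by ring] at hs
  have hc := Real.cos_sub a b
  have p1 := Real.sin_sq_add_cos_sq a
  have p2 := Real.sin_sq_add_cos_sq b
  nlinarith [hs, hc, p1, p2]


set_option maxHeartbeats 1000000 in
/-- Theorem 2, sufficiency, case `α < 0`, `N_p = N_d - 1`: if `cos i < -N_p/N_d`,
the retrograde relative trajectory is non-self-intersecting. -/
theorem retrograde_injOn_of_cos_lt (Nd Np : ℕ) (hNd : 2 ≤ Nd) (hNp : Np = Nd - 1)
    (i : ℝ) (hi : Real.cos i < -((Np : ℝ) / Nd)) :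
    Set.InjOn (retrogradeTrajectory Nd Np i) (Set.Ico 0 1) := by
  intro τ1 h1 τ2 h2 heq
  obtain ⟨h10, h11⟩ := h1
  obtain ⟨h20, h21⟩ := h2
  set c := Real.cos i with hc
  have hcl : (-1:ℝ) ≤ c := Real.neg_one_le_cos i
  have hcu : c ≤ 1 := Real.cos_le_one i
  have hNdR : (2:ℝ) ≤ (Nd:ℝ) := by exact_mod_cast hNd
  have hNd0 : (0:ℝ) < Nd := by linarith
  have hNpR : (Np:ℝ) = (Nd:ℝ) - 1 := by
    rw [hNp, Nat.cast_sub (by omega)]; norm_num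
  set n : ℕ := 2*Nd - 1 with hn
  have hnR : (n:ℝ) = 2*(Nd:ℝ) - 1 := by
    rw [hn, Nat.cast_sub (by omega)]; push_cast; ring
  set A : ℝ := (1+c)/2 with hA
  set B : ℝ := (1-c)/2 with hB
  -- rewrite the x and y coordinates
  have key : ∀ τ : ℝ, retrogradeTrajectory Nd Np i τ =
      (A * Real.cos ((n:ℝ)*(2*π*τ)) + B * Real.cos (2*π*τ),
       A * Real.sin ((n:ℝ)*(2*π*τ)) + B * Real.sin (2*π*τ),
       Real.sin (2*π*(Np:ℝ)*τ) * Real.sin i) := by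
    intro τ
    have ha : (n:ℝ)*(2*π*τ) = 2*π*(Nd:ℝ)*τ + 2*π*(Np:ℝ)*τ := by rw [hnR, hNpR]; ring
    have hb : 2*π*τ = 2*π*(Nd:ℝ)*τ - 2*π*(Np:ℝ)*τ := by rw [hNpR]; ring
    simp only [retrogradeTrajectory]
    rw [ha, hb, Real.cos_add, Real.cos_sub, Real.sin_add, Real.sin_sub, hA, hB, ← hc]
    simp only [Prod.mk.injEq]
    refine ⟨by ring, by ring, trivial⟩
  rw [key τ1, key τ2] at heq
  have hx : A * Real.cos ((n:ℝ)*(2*π*τ1)) + B * Real.cos (2*π*τ1)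
      = A * Real.cos ((n:ℝ)*(2*π*τ2)) + B * Real.cos (2*π*τ2) := congrArg Prod.fst heq
  have hy : A * Real.sin ((n:ℝ)*(2*π*τ1)) + B * Real.sin (2*π*τ1)
      = A * Real.sin ((n:ℝ)*(2*π*τ2)) + B * Real.sin (2*π*τ2) := congrArg (fun p => p.2.1) heq
  -- distance identity
  set d : ℝ := π * (τ1 - τ2) with hd
  have hdist1 : (Real.cos (2*π*τ1) - Real.cos (2*π*τ2))^2
      + (Real.sin (2*π*τ1) - Real.sin (2*π*τ2))^2 = (2*Real.sin d)^2 := by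
    rw [sq_dist_eq' (2*π*τ1) (2*π*τ2), show (2*π*τ1 - 2*π*τ2)/2 = d by rw [hd]; ring]
  have hdist2 : (Real.cos ((n:ℝ)*(2*π*τ1)) - Real.cos ((n:ℝ)*(2*π*τ2)))^2
      + (Real.sin ((n:ℝ)*(2*π*τ1)) - Real.sin ((n:ℝ)*(2*π*τ2)))^2
      = (2*Real.sin ((n:ℝ)*d))^2 := by
    rw [sq_dist_eq' ((n:ℝ)*(2*π*τ1)) ((n:ℝ)*(2*π*τ2)),
      show ((n:ℝ)*(2*π*τ1) - (n:ℝ)*(2*π*τ2))/2 = (n:ℝ)*d by rw [hd]; ring]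
  -- equality of scaled chord lengths
  have e1 : B * (Real.cos (2*π*τ1) - Real.cos (2*π*τ2))
      = A * (Real.cos ((n:ℝ)*(2*π*τ2)) - Real.cos ((n:ℝ)*(2*π*τ1))) := by linarith
  have e2 : B * (Real.sin (2*π*τ1) - Real.sin (2*π*τ2))
      = A * (Real.sin ((n:ℝ)*(2*π*τ2)) - Real.sin ((n:ℝ)*(2*π*τ1))) := by linarith
  have s1 : (B * (Real.cos (2*π*τ1) - Real.cos (2*π*τ2)))^2
      = (A * (Real.cos ((n:ℝ)*(2*π*τ2)) - Real.cos ((n:ℝ)*(2*π*τ1))))^2 := by rw [e1]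
  have s2 : (B * (Real.sin (2*π*τ1) - Real.sin (2*π*τ2)))^2
      = (A * (Real.sin ((n:ℝ)*(2*π*τ2)) - Real.sin ((n:ℝ)*(2*π*τ1))))^2 := by rw [e2]
  have hsq : (B * (2*Real.sin d))^2 = (A * (2*Real.sin ((n:ℝ)*d)))^2 := by
    linear_combination (-B^2)*hdist1 + (A^2)*hdist2 + s1 + s2
  -- key inequality A * n < B
  have hcNd : c * (Nd:ℝ) < 1 - (Nd:ℝ) := by
    have h := mul_lt_mul_of_pos_right hi hNd0
    rw [neg_mul, div_mul_cancel₀ _ (ne_of_gt hNd0)] at h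
    rw [hNpR] at h
    linarith
  have hAn : A * (n:ℝ) < B := by rw [hA, hB, hnR]; nlinarith [hcNd]
  have hA0 : 0 ≤ A := by rw [hA]; linarith
  have hB0 : 0 < B := by
    have : (0:ℝ) ≤ A * (n:ℝ) := mul_nonneg hA0 (Nat.cast_nonneg n)
    linarith
  -- show sin d = 0
  have hsd : Real.sin d = 0 := by
    by_contra hne
    have hspos : 0 < |Real.sin d| := abs_pos.mpr hne
    have h1 : 0 ≤ B * |Real.sin d| := mul_nonneg hB0.le (abs_nonneg _)
    have h2 : 0 ≤ A * |Real.sin ((n:ℝ)*d)| := mul_nonneg hA0 (abs_nonneg _)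
    have hsq' : (B * |Real.sin d|)^2 = (A * |Real.sin ((n:ℝ)*d)|)^2 := by
      calc (B * |Real.sin d|)^2 = (B * (2*Real.sin d))^2 / 4 := by
            rw [mul_pow, mul_pow, sq_abs]; ring
        _ = (A * (2*Real.sin ((n:ℝ)*d)))^2 / 4 := by rw [hsq]
        _ = (A * |Real.sin ((n:ℝ)*d)|)^2 := by
            conv_rhs => rw [mul_pow, sq_abs]
            ring
    have heqabs : B * |Real.sin d| = A * |Real.sin ((n:ℝ)*d)| := by
      have h3 : B * |Real.sin d| = Real.sqrt ((B * |Real.sin d|)^2) := (Real.sqrt_sq h1).symm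
      rw [h3, hsq', Real.sqrt_sq h2]
    have hb := abs_sin_nat_mul_le' n d
    have hcontra : B * |Real.sin d| < B * |Real.sin d| := by
      calc B * |Real.sin d| = A * |Real.sin ((n:ℝ)*d)| := heqabs
        _ ≤ A * ((n:ℝ) * |Real.sin d|) := mul_le_mul_of_nonneg_left hb hA0
        _ = (A * (n:ℝ)) * |Real.sin d| := by ring
        _ < B * |Real.sin d| := mul_lt_mul_of_pos_right hAn hspos
    exact absurd hcontra (lt_irrefl _)
  -- conclude τ1 = τ2
  obtain ⟨k, hk⟩ := Real.sin_eq_zero_iff.mp hsd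
  have hpi : (0:ℝ) < π := Real.pi_pos
  have hkτ : (k:ℝ) = τ1 - τ2 := by
    rw [hd] at hk
    have h4 : π * (k:ℝ) = π * (τ1 - τ2) := by linarith [hk]
    exact mul_left_cancel₀ (ne_of_gt hpi) h4
  have hk0 : k = 0 := by
    have ha1 : (-1:ℝ) < (k:ℝ) := by linarith
    have ha2 : (k:ℝ) < 1 := by linarith
    have hb1 : (-1:ℤ) < k := by exact_mod_cast ha1
    have hb2 : k < 1 := by exact_mod_cast ha2
    omega
  rw [hk0] at hkτ
  simp at hkτ
  linarith
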